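/- Given a colorful k-center instance with ω color classes and a feasible fractional solution (x, z) to LP1(ω), there exists a set C ⊆ P with |C| ≤ k such that the balls of radius 2 around the points of C cover at least p_1 points of 𝒞_1, and, for each 2 ≤ i ≤ ω, at least p_i − (ω − 1) · max_{j ∈ P : z_j > 0} |𝓕(j) ∩ 𝒞_i| points of 𝒞_i; i.e., |𝒞_1 ∩ ∪_{c ∈ C} 𝓑(c, 2)| ≥ p_1 and |𝒞_i ∩ ∪_{c ∈ C} 𝓑(c, 2)| ≥ p_i − (ω − 1) · max_{j : z_j > 0} |𝓕(j) ∩ 𝒞_i| for 2 ≤ i ≤ ω. -/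

import Mathlib

/-!
Greedily choose centres of maximal `z`, each outside the flowers of the earlier ones, and charge
every point with `z > 0` to a centre whose flower contains it and whose `z` is at least its own.
The unit balls around the centres are disjoint, so `z` on the centres is a fractional solution of
a small LP: open at most `k` centres so as to serve, for each colour, the points of that colour
charged to them. Moving along the kernel of its `ω + 1` constraints gives a solution with at most
`ω + 1` fractional coordinates. Opening its integral centres and the `⌈m⌉` fractional ones that
serve the first colour best (`m` the fractional mass) loses nothing for the first colour and, for
any other colour, at most `ω - 1` centres' worth of charged points, each lying in one flower.
Flowers have radius two.
-/

open scoped Classical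

noncomputable def bal {P : Type*} [Fintype P] [MetricSpace P] (j : P) (ρ : ℝ) : Finset P :=
  Finset.univ.filter fun i => dist i j ≤ ρ

noncomputable def flower {P : Type*} [Fintype P] [MetricSpace P] (j : P) : Finset P :=
  (bal j 1).biUnion fun i => bal i 1

open Finset

theorem exists_shift_mem_Icc_of_mem_Ioo {α : Type*} (F : Finset α) {y d : α → ℝ}
    (hy : ∀ s ∈ F, y s ∈ Set.Ioo 0 1) (hd : ∃ s ∈ F, d s ≠ 0) :
    ∃ ε : ℝ, (∀ s ∈ F, y s + ε * d s ∈ Set.Icc 0 1) ∧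
      ∃ s ∈ F, y s + ε * d s = 0 ∨ y s + ε * d s = 1 := by
  obtain ⟨s₀, hs₀F, hs₀⟩ := hd
  -- `1 / μ s` is the step along `d` at which coordinate `s` reaches `0` or `1`, so the largest
  -- `μ` gives the first coordinate to reach the boundary
  set μ : α → ℝ := fun s => max (d s / (1 - y s)) (-d s / y s)
  obtain ⟨s₁, hs₁F, hmax⟩ := exists_max_image F μ ⟨s₀, hs₀F⟩
  have hpos : ∀ s ∈ F, 0 < 1 - y s ∧ 0 < y s := fun s hs => ⟨sub_pos.2 (hy s hs).2, (hy s hs).1⟩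
  have hμ : 0 < μ s₁ := by
    refine lt_of_lt_of_le ?_ (hmax s₀ hs₀F)
    rcases hs₀.lt_or_gt with h | h
    · exact lt_max_of_lt_right (div_pos (neg_pos.2 h) (hpos s₀ hs₀F).2)
    · exact lt_max_of_lt_left (div_pos h (hpos s₀ hs₀F).1)
  refine ⟨(μ s₁)⁻¹, fun s hs => ?_, s₁, hs₁F, ?_⟩
  · have h₁ : (μ s₁)⁻¹ * d s ≤ 1 - y s := by
      rw [inv_mul_le_iff₀ hμ, ← div_le_iff₀ (hpos s hs).1]
      exact (le_max_left _ _).trans (hmax s hs)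
    have h₂ : (μ s₁)⁻¹ * -d s ≤ y s := by
      rw [inv_mul_le_iff₀ hμ, ← div_le_iff₀ (hpos s hs).2]
      exact (le_max_right _ _).trans (hmax s hs)
    constructor <;> linarith
  · obtain ⟨h₁, h₂⟩ := hpos s₁ hs₁F
    have hd : d s₁ ≠ 0 := fun h0 => hμ.ne' (by simp [μ, h0])
    rcases max_choice (d s₁ / (1 - y s₁)) (-d s₁ / y s₁) with h | h
    · right
      rw [show μ s₁ = d s₁ / (1 - y s₁) from h]
      field_simp; ring
    · left
      rw [show μ s₁ = -d s₁ / y s₁ from h]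
      field_simp; ring

theorem exists_subset_card_eq_forall_le {α : Type*} (a : α → ℝ) (F : Finset α) {t : ℕ}
    (ht : t ≤ #F) :
    ∃ U ⊆ F, #U = t ∧ ∀ u ∈ U, ∀ v ∈ F \ U, a v ≤ a u := by
  induction t with
  | zero => exact ⟨∅, empty_subset F, rfl, by simp⟩
  | succ t ih =>
    obtain ⟨U, hUF, hU, hdom⟩ := ih (Nat.le_of_succ_le ht)
    obtain ⟨m, hm, hmax⟩ := exists_max_image (F \ U) a <| by
      rw [sdiff_nonempty]
      exact fun h => by have := card_le_card h; omega
    have hmU : m ∉ U := (mem_sdiff.1 hm).2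
    refine ⟨insert m U, insert_subset (mem_sdiff.1 hm).1 hUF,
      by rw [card_insert_of_notMem hmU, hU], fun u hu v hv => ?_⟩
    have hvU : v ∈ F \ U :=
      mem_sdiff.2 ⟨(mem_sdiff.1 hv).1, fun h => (mem_sdiff.1 hv).2 (mem_insert_of_mem h)⟩
    rcases mem_insert.1 hu with rfl | hu
    · exact hmax v hvU
    · exact hdom u hu v hvU

theorem sum_mul_le_sum_of_forall_le {α : Type*} {F U : Finset α} (hUF : U ⊆ F) {y a : α → ℝ}
    (hy : ∀ s ∈ F, y s ∈ Set.Icc 0 1) (ha : ∀ s ∈ F, 0 ≤ a s) (hyU : ∑ s ∈ F, y s ≤ #U)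
    (hdom : ∀ u ∈ U, ∀ v ∈ F \ U, a v ≤ a u) :
    ∑ s ∈ F, y s * a s ≤ ∑ s ∈ U, a s := by
  rcases U.eq_empty_or_nonempty with rfl | hU
  · have hy0 : ∀ s ∈ F, y s = 0 := (sum_eq_zero_iff_of_nonneg fun s hs => (hy s hs).1).1
      (le_antisymm (by simpa using hyU) (sum_nonneg fun s hs => (hy s hs).1))
    have : ∑ s ∈ F, y s * a s = 0 := sum_eq_zero fun s hs => by rw [hy0 s hs, zero_mul]
    simp [this]
  -- the smallest weight in `U` separates `U` from `F \ U`
  obtain ⟨u₀, hu₀, hmin⟩ := exists_min_image U a hU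
  have hθ : 0 ≤ a u₀ := ha u₀ (hUF hu₀)
  have hmass : ∑ s ∈ F \ U, y s ≤ ∑ s ∈ U, (1 - y s) := by
    rw [sum_sdiff_eq_sub hUF, sum_sub_distrib]
    simp only [sum_const, nsmul_eq_mul, mul_one]
    linarith
  calc ∑ s ∈ F, y s * a s = ∑ s ∈ F \ U, y s * a s + ∑ s ∈ U, y s * a s :=
        (sum_sdiff hUF).symm
    _ ≤ ∑ s ∈ F \ U, y s * a u₀ + ∑ s ∈ U, y s * a s := by
        gcongr with s hs
        · exact (hy s (mem_sdiff.1 hs).1).1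
        · exact hdom u₀ hu₀ s hs
    _ ≤ ∑ s ∈ U, (1 - y s) * a u₀ + ∑ s ∈ U, y s * a s := by
        rw [← sum_mul, ← sum_mul]
        gcongr
    _ ≤ ∑ s ∈ U, (1 - y s) * a s + ∑ s ∈ U, y s * a s := by
        gcongr with s hs
        · exact sub_nonneg.2 (hy s (hUF hs)).2
        · exact hmin s hs
    _ = ∑ s ∈ U, a s := by rw [← sum_add_distrib]; simp [← add_mul]

theorem sum_le_sum_mul_card_filter {β γ : Type*} {A : Finset β} {S : Finset γ} {σ : β → γ}
    (hσ : ∀ i ∈ A, σ i ∈ S) {z : β → ℝ} {w : γ → ℝ} (hz : ∀ i ∈ A, z i ≤ w (σ i)) :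
    ∑ i ∈ A, z i ≤ ∑ s ∈ S, w s * #{i ∈ A | σ i = s} := by
  rw [← sum_fiberwise_of_maps_to hσ]
  gcongr with s
  rw [mul_comm, ← nsmul_eq_mul]
  exact sum_le_card_nsmul _ _ _ fun i hi => (mem_filter.1 hi).2 ▸ hz i (mem_filter.1 hi).1

section Rounding

variable {α ι : Type*} [Fintype α] [Fintype ι]

theorem exists_ne_zero_sum_mul_eq_zero (F : Finset α) (g : ι → α → ℝ)
    (hF : Fintype.card ι < #F) :
    ∃ d : α → ℝ, (∀ s ∉ F, d s = 0) ∧ (∃ s, d s ≠ 0) ∧ ∀ c, ∑ s, d s * g c s = 0 := by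
  have hdep : ¬LinearIndependent ℝ fun (s : F) c => g c s := fun h => by
    have := h.fintype_card_le_finrank
    rw [Module.finrank_fintype_fun_eq_card, Fintype.card_coe] at this
    omega
  obtain ⟨w, hw, s₀, hs₀⟩ := Fintype.not_linearIndependent_iff.mp hdep
  set d : α → ℝ := fun s => if h : s ∈ F then w ⟨s, h⟩ else 0
  refine ⟨d, fun s hs => dif_neg hs, ⟨s₀, by simpa [d] using hs₀⟩, fun c => ?_⟩
  calc ∑ s, d s * g c s = ∑ s ∈ F, d s * g c s :=
        (sum_subset (subset_univ F) fun s _ hs => by simp [d, hs]).symm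
    _ = ∑ s : F, w s * g c s := by rw [← sum_coe_sort F]; simp [d]
    _ = 0 := by simpa using congrFun hw c

noncomputable def fractionalCoords (y : α → ℝ) : Finset α := {s | y s ∈ Set.Ioo 0 1}

@[simp]
theorem mem_fractionalCoords {y : α → ℝ} {s : α} :
    s ∈ fractionalCoords y ↔ y s ∈ Set.Ioo 0 1 := by
  simp [fractionalCoords]

theorem exists_card_fractionalCoords_le (A : ι → α → ℝ) (y : α → ℝ)
    (hy : ∀ s, y s ∈ Set.Icc 0 1) :
    ∃ y' : α → ℝ, (∀ s, y' s ∈ Set.Icc 0 1) ∧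
      (∀ c, ∑ s, y' s * A c s = ∑ s, y s * A c s) ∧ #(fractionalCoords y') ≤ Fintype.card ι := by
  induction hn : #(fractionalCoords y) using Nat.strong_induction_on generalizing y with
  | _ n ih =>
  by_cases hle : n ≤ Fintype.card ι
  · exact ⟨y, hy, fun _ => rfl, hn ▸ hle⟩
  set F := fractionalCoords y
  obtain ⟨d, hdF, ⟨s₀, hs₀⟩, hdA⟩ := exists_ne_zero_sum_mul_eq_zero F A (by omega)
  have hs₀F : s₀ ∈ F := by_contra fun h => hs₀ (hdF s₀ h)
  obtain ⟨ε, hεF, s₁, hs₁F, hs₁⟩ :=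
    exists_shift_mem_Icc_of_mem_Ioo F (fun s => mem_fractionalCoords.1) ⟨s₀, hs₀F, hs₀⟩
  set y₁ : α → ℝ := fun s => y s + ε * d s
  have hy₁ : ∀ s, y₁ s ∈ Set.Icc 0 1 := fun s => by
    by_cases hs : s ∈ F
    · exact hεF s hs
    · simpa [y₁, hdF s hs] using hy s
  have hsum : ∀ c, ∑ s, y₁ s * A c s = ∑ s, y s * A c s := fun c => by
    simp [y₁, add_mul, sum_add_distrib, mul_assoc, ← mul_sum, hdA]
  have hsub : fractionalCoords y₁ ⊆ F.erase s₁ := fun s hs => by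
    rw [mem_fractionalCoords] at hs
    refine mem_erase.2 ⟨?_, ?_⟩
    · rintro rfl
      rcases hs₁ with h | h <;> simp [y₁, h] at hs
    · by_contra hsF
      simp only [y₁, hdF s hsF, mul_zero, add_zero] at hs
      exact hsF (mem_fractionalCoords.2 hs)
  have hlt : #(fractionalCoords y₁) < n :=
    hn ▸ (card_le_card hsub).trans_lt (card_erase_lt_of_mem hs₁F)
  obtain ⟨y', hy', hy'A, hy'F⟩ := ih _ hlt y₁ hy₁ rfl
  exact ⟨y', hy', fun c => (hy'A c).trans (hsum c), hy'F⟩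

theorem sum_mul_eq_sum_add_sum_fractionalCoords {y : α → ℝ} (hy : ∀ s, y s ∈ Set.Icc 0 1)
    (g : α → ℝ) :
    ∑ s, y s * g s = ∑ s with y s = 1, g s + ∑ s ∈ fractionalCoords y, y s * g s := by
  rw [← sum_filter_add_sum_filter_not univ fun s => y s = 1]
  congr 1
  · exact sum_congr rfl fun s hs => by rw [(mem_filter.1 hs).2, one_mul]
  · refine (sum_subset (fun s hs => ?_) fun s hs hsF => ?_).symm
    · simpa using (mem_fractionalCoords.1 hs).2.ne
    · have : y s = 0 := by
        by_contra h
        exact hsF (mem_fractionalCoords.2 ⟨lt_of_le_of_ne (hy s).1 (Ne.symm h),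
          lt_of_le_of_ne (hy s).2 (by simpa using hs)⟩)
      rw [this, zero_mul]

theorem exists_rounding_of_card_fractionalCoords_le {y : α → ℝ} (hy : ∀ s, y s ∈ Set.Icc 0 1)
    (hfrac : #(fractionalCoords y) ≤ Fintype.card ι + 1) {k : ℕ} (hk : ∑ s, y s ≤ k)
    (a : α → ι → ℕ) {M : ι → ℕ} (hM : ∀ s c, a s c ≤ M c) (i₀ : ι) :
    ∃ C : Finset α, #C ≤ k ∧ ∑ s, y s * a s i₀ ≤ ∑ s ∈ C, (a s i₀ : ℝ) ∧
      ∀ c ≠ i₀, ∑ s, y s * a s c - (Fintype.card ι - 1) * M c ≤ ∑ s ∈ C, (a s c : ℝ) := by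
  set O : Finset α := {s | y s = 1}
  set F := fractionalCoords y
  have hyF : ∀ s ∈ F, y s ∈ Set.Icc 0 1 := fun s _ => hy s
  set m := ∑ s ∈ F, y s
  have hm : 0 ≤ m := sum_nonneg fun s hs => (hyF s hs).1
  have hmF : m ≤ #F := by simpa using sum_le_card_nsmul F y 1 fun s hs => (hyF s hs).2
  have hOm : #O + m ≤ k := by
    have := sum_mul_eq_sum_add_sum_fractionalCoords hy fun _ => 1
    simp only [mul_one, sum_const, nsmul_one] at this
    linarith
  set t := ⌈m⌉₊
  have htk : #O + t ≤ k := by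
    have := Nat.ceil_le.2 (show m + #O ≤ k by linarith)
    rwa [Nat.ceil_add_natCast hm, add_comm] at this
  obtain ⟨U, hUF, hU, hdom⟩ :=
    exists_subset_card_eq_forall_le (fun s => (a s i₀ : ℝ)) F (Nat.ceil_le.2 hmF)
  have hOU : Disjoint O U := disjoint_of_subset_right hUF <| disjoint_left.2 fun s hO hF =>
    (mem_fractionalCoords.1 hF).2.ne (mem_filter.1 hO).2
  refine ⟨O ∪ U, (card_union_of_disjoint hOU).trans_le (hU ▸ htk), ?_, fun c hc => ?_⟩
  · rw [sum_mul_eq_sum_add_sum_fractionalCoords hy, sum_union hOU]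
    gcongr
    exact sum_mul_le_sum_of_forall_le hUF hyF (fun _ _ => by positivity) (hU ▸ Nat.le_ceil m) hdom
  have hι : 2 ≤ Fintype.card ι := Fintype.one_lt_card_iff.2 ⟨c, i₀, hc⟩
  -- the unopened fractional mass is at most `m ≤ t`, and at most `#F - t ≤ card ι + 1 - t`
  have hloss : ∑ s ∈ F \ U, y s ≤ Fintype.card ι - 1 := by
    rcases le_or_gt t (Fintype.card ι - 1) with ht | ht
    · calc ∑ s ∈ F \ U, y s ≤ m :=
            sum_le_sum_of_subset_of_nonneg sdiff_subset fun s hs _ => (hyF s hs).1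
        _ ≤ t := Nat.le_ceil m
        _ ≤ ((Fintype.card ι - 1 : ℕ) : ℝ) := by exact_mod_cast ht
        _ = Fintype.card ι - 1 := by push_cast [Nat.one_le_of_lt hι]; ring
    · have hcard : #(F \ U) ≤ 1 := by rw [card_sdiff_of_subset hUF]; omega
      calc ∑ s ∈ F \ U, y s ≤ #(F \ U) := by
            simpa using sum_le_card_nsmul (F \ U) y 1 fun s hs => (hyF s (mem_sdiff.1 hs).1).2
        _ ≤ 1 := by exact_mod_cast hcard
        _ ≤ Fintype.card ι - 1 := by
            have : (2 : ℝ) ≤ Fintype.card ι := by exact_mod_cast hι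
            linarith
  have hFU : ∑ s ∈ F \ U, y s * a s c ≤ (Fintype.card ι - 1) * M c :=
    calc ∑ s ∈ F \ U, y s * a s c ≤ ∑ s ∈ F \ U, y s * M c := by
          gcongr with s hs
          · exact (hyF s (mem_sdiff.1 hs).1).1
          · exact_mod_cast hM s c
      _ ≤ (Fintype.card ι - 1) * M c := by rw [← sum_mul]; gcongr
  have hUc : ∑ s ∈ U, y s * a s c ≤ ∑ s ∈ U, (a s c : ℝ) := by
    gcongr with s hs
    exact mul_le_of_le_one_left (by positivity) (hyF s (hUF hs)).2
  rw [sum_mul_eq_sum_add_sum_fractionalCoords hy, sum_union hOU, ← sum_sdiff hUF]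
  linarith

theorem exists_rounding {y : α → ℝ} (hy : ∀ s, y s ∈ Set.Icc 0 1) {k : ℕ} (hk : ∑ s, y s ≤ k)
    (a : α → ι → ℕ) {M : ι → ℕ} (hM : ∀ s c, a s c ≤ M c) (i₀ : ι) :
    ∃ C : Finset α, #C ≤ k ∧ ∑ s, y s * a s i₀ ≤ ∑ s ∈ C, (a s i₀ : ℝ) ∧
      ∀ c ≠ i₀, ∑ s, y s * a s c - (Fintype.card ι - 1) * M c ≤ ∑ s ∈ C, (a s c : ℝ) := by
  -- `none` is the budget constraint, `some c` the demand of colour `c`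
  obtain ⟨y', hy', hsum, hfrac⟩ :=
    exists_card_fractionalCoords_le (fun (c : Option ι) s => c.elim 1 fun c => (a s c : ℝ)) y hy
  rw [Fintype.card_option] at hfrac
  have hk' : ∑ s, y' s ≤ k := by simpa using (hsum none).trans_le (by simpa using hk)
  obtain ⟨C, hCk, hC₀, hC⟩ := exists_rounding_of_card_fractionalCoords_le hy' hfrac hk' a hM i₀
  exact ⟨C, hCk, (hsum (some i₀)) ▸ hC₀, fun c hc => (hsum (some c)) ▸ hC c hc⟩

end Rounding

theorem Finset.exists_rounding {α ι : Type*} [Fintype ι] (S : Finset α) {y : α → ℝ}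
    (hy : ∀ s ∈ S, y s ∈ Set.Icc 0 1) {k : ℕ} (hk : ∑ s ∈ S, y s ≤ k) (a : α → ι → ℕ)
    {M : ι → ℕ} (hM : ∀ s ∈ S, ∀ c, a s c ≤ M c) (i₀ : ι) :
    ∃ C : Finset α, #C ≤ k ∧ ∑ s ∈ S, y s * a s i₀ ≤ ∑ s ∈ C, (a s i₀ : ℝ) ∧
      ∀ c ≠ i₀, ∑ s ∈ S, y s * a s c - (Fintype.card ι - 1) * M c ≤ ∑ s ∈ C, (a s c : ℝ) := by
  obtain ⟨C, hCk, hC₀, hC⟩ := _root_.exists_rounding (y := fun s : S => y s) (fun s => hy s s.2)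
    (by rwa [sum_coe_sort S y]) (fun s c => a s c) (fun s => hM s s.2) i₀
  refine ⟨C.map (Function.Embedding.subtype _), by simpa using hCk, ?_, fun c hc => ?_⟩
  · simpa [sum_map, sum_attach S fun s => y s * a s i₀] using hC₀
  · simpa [sum_map, sum_attach S fun s => y s * a s c] using hC c hc

section Flower

variable {P : Type*} [Fintype P] [MetricSpace P]

@[simp]
theorem mem_bal {i j : P} {ρ : ℝ} : i ∈ bal j ρ ↔ dist i j ≤ ρ := by
  simp [bal]

theorem mem_flower {i j : P} : i ∈ flower j ↔ ∃ m, dist m j ≤ 1 ∧ dist i m ≤ 1 := by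
  simp [flower]

theorem mem_flower_comm {i j : P} : i ∈ flower j ↔ j ∈ flower i := by
  simp only [mem_flower, dist_comm]
  exact exists_congr fun m => and_comm

theorem self_mem_flower (j : P) : j ∈ flower j :=
  mem_flower.2 ⟨j, by simp, by simp⟩

theorem flower_subset_bal_two (j : P) : flower j ⊆ bal j 2 := fun i hi => by
  obtain ⟨m, hmj, him⟩ := mem_flower.1 hi
  rw [mem_bal]
  linarith [dist_triangle i m j]

theorem disjoint_bal_of_notMem_flower {s s' : P} (h : s' ∉ flower s) :
    Disjoint (bal s 1) (bal s' 1) :=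
  disjoint_left.2 fun m hs hs' =>
    h (mem_flower.2 ⟨m, mem_bal.1 hs, by simpa [dist_comm] using hs'⟩)

theorem sum_sum_bal_le_sum {S : Finset P} (hS : (S : Set P).Pairwise fun s s' => s' ∉ flower s)
    {x : P → ℝ} (hx : ∀ i, 0 ≤ x i) : ∑ s ∈ S, ∑ m ∈ bal s 1, x m ≤ ∑ m, x m := by
  rw [← sum_biUnion fun s hs s' hs' hne => disjoint_bal_of_notMem_flower (hS hs hs' hne)]
  exact sum_le_sum_of_subset_of_nonneg (subset_univ _) fun m _ _ => hx m

theorem exists_flower_separated_cover (z : P → ℝ) (T : Finset P) :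
    ∃ S ⊆ T, (∀ i ∈ T, ∃ s ∈ S, i ∈ flower s ∧ z i ≤ z s) ∧
      (S : Set P).Pairwise fun s s' => s' ∉ flower s := by
  induction T using strongInduction with
  | H T ih =>
  rcases T.eq_empty_or_nonempty with rfl | hT
  · exact ⟨∅, empty_subset _, by simp, by simp⟩
  obtain ⟨s, hsT, hmax⟩ := exists_max_image T z hT
  obtain ⟨S, hS, hcover, hsep⟩ := ih (T \ flower s) <| (ssubset_iff_of_subset sdiff_subset).2
    ⟨s, hsT, fun h => (mem_sdiff.1 h).2 (self_mem_flower s)⟩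
  refine ⟨insert s S, insert_subset hsT (hS.trans sdiff_subset), fun i hi => ?_, ?_⟩
  · by_cases his : i ∈ flower s
    · exact ⟨s, mem_insert_self s S, his, hmax i hi⟩
    · obtain ⟨s', hs', h⟩ := hcover i (mem_sdiff.2 ⟨hi, his⟩)
      exact ⟨s', mem_insert_of_mem hs', h⟩
  · have hfar : ∀ s' ∈ S, s' ∉ flower s := fun s' hs' => (mem_sdiff.1 (hS hs')).2
    rw [coe_insert]
    exact hsep.insert fun s' hs' _ => ⟨hfar s' hs', fun h => hfar s' hs' (mem_flower_comm.1 h)⟩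

theorem exists_flower_separated_clustering {x z : P → ℝ} (hx : ∀ i, 0 ≤ x i)
    (hcov : ∀ i, z i ≤ ∑ m ∈ bal i 1, x m) {k : ℕ} (hk : ∑ i, x i ≤ k) :
    ∃ S ⊆ ({j | 0 < z j} : Finset P), ∃ σ : P → P, ∑ s ∈ S, z s ≤ k ∧
      ∀ i, 0 < z i → σ i ∈ S ∧ i ∈ flower (σ i) ∧ z i ≤ z (σ i) := by
  obtain ⟨S, hST, hcover, hsep⟩ := exists_flower_separated_cover z {j | 0 < z j}
  choose! σ hσ using hcover
  refine ⟨S, hST, σ, ?_, fun i hi => hσ i (by simpa using hi)⟩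
  calc ∑ s ∈ S, z s ≤ ∑ s ∈ S, ∑ m ∈ bal s 1, x m := sum_le_sum fun s _ => hcov s
    _ ≤ k := (sum_sum_bal_le_sum hsep hx).trans hk

theorem card_filter_eq_le_card_flower_inter {K A : Finset P} (hKA : K ⊆ A) {σ : P → P}
    (hσ : ∀ i ∈ K, i ∈ flower (σ i)) (s : P) : #{i ∈ K | σ i = s} ≤ #(flower s ∩ A) :=
  card_le_card fun i hi => by
    obtain ⟨hiK, rfl⟩ := mem_filter.1 hi
    exact mem_inter.2 ⟨hσ i hiK, hKA hiK⟩

theorem sum_card_filter_eq_le_card_inter_biUnion {K A : Finset P} (hKA : K ⊆ A) {σ : P → P}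
    (hσ : ∀ i ∈ K, i ∈ flower (σ i)) (C : Finset P) :
    ∑ s ∈ C, #{i ∈ K | σ i = s} ≤ #(A ∩ C.biUnion fun c => bal c 2) := by
  refine (sum_card_fiberwise_eq_card_filter K C σ).trans_le <| card_le_card fun i hi => ?_
  obtain ⟨hiK, hσi⟩ := mem_filter.1 hi
  exact mem_inter.2 ⟨hKA hiK, mem_biUnion.2 ⟨σ i, hσi, flower_subset_bal_two _ (hσ i hiK)⟩⟩

end Flower

theorem stmt14_general {P : Type*} [Fintype P] [MetricSpace P]
    (ω : ℕ) (hω : 0 < ω) (𝒞 : Fin ω → Finset P)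
    (k : ℕ) (p : Fin ω → ℕ) (x z : P → ℝ)
    (hx0 : ∀ i, 0 ≤ x i)
    (hz0 : ∀ i, 0 ≤ z i) (hz1 : ∀ i, z i ≤ 1)
    (hcov : ∀ i : P, z i ≤ ∑ m ∈ bal i 1, x m)
    (hk : ∑ i : P, x i ≤ (k : ℝ))
    (hp : ∀ j : Fin ω, (p j : ℝ) ≤ ∑ i ∈ 𝒞 j, z i) :
    ∃ C : Finset P, C.card ≤ k ∧
      p ⟨0, hω⟩ ≤ (𝒞 ⟨0, hω⟩ ∩ C.biUnion fun c => bal c 2).card ∧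
      ∀ i : Fin ω, i ≠ ⟨0, hω⟩ →
        (p i : ℤ) - (ω - 1 : ℤ) *
            (((Finset.univ.filter fun j => 0 < z j).sup fun j => (flower j ∩ 𝒞 i).card : ℕ) : ℤ)
          ≤ ((𝒞 i ∩ C.biUnion fun c => bal c 2).card : ℤ) := by
  obtain ⟨S, hST, σ, hbudget, hσ⟩ := exists_flower_separated_clustering hx0 hcov hk
  set K : Fin ω → Finset P := fun c => {i ∈ 𝒞 c | 0 < z i}
  have hσK : ∀ c, ∀ i ∈ K c, σ i ∈ S ∧ i ∈ flower (σ i) ∧ z i ≤ z (σ i) :=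
    fun c i hi => hσ i (mem_filter.1 hi).2
  set a : P → Fin ω → ℕ := fun s c => #{i ∈ K c | σ i = s}
  have hdemand : ∀ c, (p c : ℝ) ≤ ∑ s ∈ S, z s * a s c := fun c =>
    ((hp c).trans_eq (sum_filter_of_ne fun i _ hi => (hz0 i).lt_of_ne' hi).symm).trans <|
      sum_le_sum_mul_card_filter (fun i hi => (hσK c i hi).1) fun i hi => (hσK c i hi).2.2
  have hM : ∀ s ∈ S, ∀ c, a s c ≤ ({j | 0 < z j} : Finset P).sup fun j => #(flower j ∩ 𝒞 c) :=
    fun s hs c => (card_filter_eq_le_card_flower_inter (filter_subset _ _)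
      (fun i hi => (hσK c i hi).2.1) s).trans (le_sup (f := fun j => #(flower j ∩ 𝒞 c)) (hST hs))
  have hserved : ∀ c, ∀ C : Finset P, ∑ s ∈ C, (a s c : ℝ) ≤ #(𝒞 c ∩ C.biUnion fun c => bal c 2) :=
    fun c C => by
      exact_mod_cast sum_card_filter_eq_le_card_inter_biUnion (filter_subset _ _)
        (fun i hi => (hσK c i hi).2.1) C
  obtain ⟨C, hCk, hC₀, hC⟩ := S.exists_rounding (fun s _ => ⟨hz0 s, hz1 s⟩) hbudget a hM ⟨0, hω⟩
  refine ⟨C, hCk, ?_, fun c hc => ?_⟩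
  · exact_mod_cast (hdemand _).trans (hC₀.trans (hserved _ C))
  · have h := (sub_le_sub_right (hdemand c) _).trans ((hC c hc).trans (hserved c C))
    rw [Fintype.card_fin] at h
    exact_mod_cast h

/-- the pseudo-approximation guarantee for `ω` color classes. Given a feasible
fractional solution `(x, z)` to LP1(ω), at most `k` balls of radius two cover at least `p 1`
points of the first color class and, for each other class `i`, at least
`p i − (ω − 1) · max_{j : z j > 0} |𝓕(j) ∩ 𝒞 i|` points of `𝒞 i`. -/
theorem stmt14 {P : Type*} [Fintype P] [MetricSpace P]
    (ω : ℕ) (hω : 0 < ω) (𝒞 : Fin ω → Finset P)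
    (hpart : ∀ q : P, ∃! i : Fin ω, q ∈ 𝒞 i)
    (k : ℕ) (p : Fin ω → ℕ) (x z : P → ℝ)
    (hx0 : ∀ i, 0 ≤ x i) (hx1 : ∀ i, x i ≤ 1)
    (hz0 : ∀ i, 0 ≤ z i) (hz1 : ∀ i, z i ≤ 1)
    (hcov : ∀ i : P, z i ≤ ∑ m ∈ bal i 1, x m)
    (hk : ∑ i : P, x i ≤ (k : ℝ))
    (hp : ∀ j : Fin ω, (p j : ℝ) ≤ ∑ i ∈ 𝒞 j, z i) :
    ∃ C : Finset P, C.card ≤ k ∧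
      p ⟨0, hω⟩ ≤ (𝒞 ⟨0, hω⟩ ∩ C.biUnion fun c => bal c 2).card ∧
      ∀ i : Fin ω, i ≠ ⟨0, hω⟩ →
        (p i : ℤ) - (ω - 1 : ℤ) *
            (((Finset.univ.filter fun j => 0 < z j).sup fun j => (flower j ∩ 𝒞 i).card : ℕ) : ℤ)
          ≤ ((𝒞 i ∩ C.biUnion fun c => bal c 2).card : ℤ) :=
  stmt14_general ω hω 𝒞 k p x z hx0 hz0 hz1 hcov hk hp
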